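/- With the setup of the consistent Bayesian posterior, let $P^{post}$ be the measure on $\Lambda$ with density $\pi^{post}(\lambda) = \pi^{prior}(\lambda) \, \pi^{obs}(Q(\lambda)) / \pi^{Q(prior)}(Q(\lambda))$ with respect to $\mu_\Lambda$. Then the push-forward of $P^{post}$ under $Q$ equals the observed measure: for every $A \in \mathcal{B}_\mathcal{D}$, $P^{post}(Q^{-1}(A)) = \int_A \pi^{obs}(q)\, d\mu_\mathcal{D}(q)$. That is, the posterior is consistent with the observed distribution. -/

import Mathlib

/-!
Write the posterior density as `πprior * (g ∘ Q)` with `g = πobs / πQ`. Pushing a density of the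
form `g ∘ Q` forward along `Q` multiplies the pushed-forward measure by `g`, so the push-forward of
the posterior is `(μD.withDensity πQ).withDensity g = μD.withDensity (πQ * g)`. Since `πQ` has
total mass one it is finite almost everywhere, and `πobs` vanishes where `πQ` does, so
`πQ * (πobs / πQ) = πobs` almost everywhere.
-/

open MeasureTheory ENNReal

namespace MeasureTheory

variable {α β : Type*} [MeasurableSpace α] [MeasurableSpace β]

theorem Measure.map_withDensity_comp (ν : Measure α) {f : α → β} (hf : Measurable f)
    {g : β → ℝ≥0∞} (hg : Measurable g) :
    (ν.withDensity (g ∘ f)).map f = (ν.map f).withDensity g := by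
  ext s hs
  rw [Measure.map_apply hf hs, withDensity_apply _ (hf hs), withDensity_apply _ hs,
    setLIntegral_map hs hg hf]
  rfl

theorem lintegral_eq_of_map_withDensity_eq {μ : Measure α} {ν : Measure β} {f : α → β}
    (hf : Measurable f) {ρ : α → ℝ≥0∞} {σ : β → ℝ≥0∞}
    (h : (μ.withDensity ρ).map f = ν.withDensity σ) :
    ∫⁻ y, σ y ∂ν = ∫⁻ x, ρ x ∂μ := by
  simpa only [Measure.map_apply hf MeasurableSet.univ, Set.preimage_univ,
    withDensity_apply _ MeasurableSet.univ, Measure.restrict_univ] using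
    (congrArg (· Set.univ) h).symm

theorem withDensity_mul_div_cancel {μ : Measure α} {f g : α → ℝ≥0∞}
    (hf : ∀ᵐ x ∂μ, f x ≠ ∞) (hgf : ∀ᵐ x ∂μ, f x = 0 → g x = 0) :
    μ.withDensity (f * (g / f)) = μ.withDensity g := by
  refine withDensity_congr_ae ?_
  filter_upwards [hf, hgf] with x hx_fin hx_zero
  rcases eq_or_ne (f x) 0 with hx | hx
  · simp [hx, hx_zero hx]
  · exact ENNReal.mul_div_cancel hx hx_fin

end MeasureTheory

theorem consistent_posterior_pushforward_general
    {Λ D : Type*} [MeasurableSpace Λ] [MeasurableSpace D]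
    (μΛ : Measure Λ) (μD : Measure D)
    (Q : Λ → D) (hQ : Measurable Q)
    (πprior : Λ → ℝ≥0∞) (hπprior : Measurable πprior)
    (hprior1 : ∫⁻ l, πprior l ∂μΛ = 1)
    (πQ : D → ℝ≥0∞) (hπQ : Measurable πQ)
    (hpush : Measure.map Q (μΛ.withDensity πprior) = μD.withDensity πQ)
    (πobs : D → ℝ≥0∞) (hπobs : Measurable πobs)
    (habs : ∀ q, πQ q = 0 → πobs q = 0) :
    ∀ A : Set D, MeasurableSet A →
      (μΛ.withDensity (fun l => πprior l * (πobs (Q l) / πQ (Q l)))) (Q ⁻¹' A)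
        = ∫⁻ q in A, πobs q ∂μD := by
  intro A hA
  have hratio : Measurable (πobs / πQ) := hπobs.div hπQ
  have hπQ_fin : ∀ᵐ q ∂μD, πQ q ≠ ∞ := by
    refine (ae_lt_top hπQ ?_).mono fun q hq => hq.ne
    rw [lintegral_eq_of_map_withDensity_eq hQ hpush, hprior1]
    exact one_ne_top
  have hmap : (μΛ.withDensity (fun l => πprior l * (πobs (Q l) / πQ (Q l)))).map Q
      = μD.withDensity πobs := by
    calc _ = ((μΛ.withDensity πprior).withDensity ((πobs / πQ) ∘ Q)).map Q := by
          rw [← withDensity_mul _ hπprior (hratio.comp hQ)]; rfl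
      _ = (μD.withDensity πQ).withDensity (πobs / πQ) := by
          rw [Measure.map_withDensity_comp _ hQ hratio, hpush]
      _ = μD.withDensity πobs := by
          rw [← withDensity_mul _ hπQ hratio,
            withDensity_mul_div_cancel hπQ_fin (ae_of_all _ habs)]
  rw [← Measure.map_apply hQ hA, hmap, withDensity_apply _ hA]

/-- Consistency of the consistent Bayesian posterior: the push-forward under `Q` of the
measure with density `πprior * (πobs ∘ Q) / (πQ ∘ Q)` equals the observed measure. -/
theorem consistent_posterior_pushforward
    {Λ D : Type*} [MeasurableSpace Λ] [MeasurableSpace D]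
    (μΛ : Measure Λ) (μD : Measure D)
    (Q : Λ → D) (hQ : Measurable Q)
    (πprior : Λ → ℝ≥0∞) (hπprior : Measurable πprior)
    (hprior1 : ∫⁻ l, πprior l ∂μΛ = 1)
    (πQ : D → ℝ≥0∞) (hπQ : Measurable πQ)
    (hpush : Measure.map Q (μΛ.withDensity πprior) = μD.withDensity πQ)
    (πobs : D → ℝ≥0∞) (hπobs : Measurable πobs)
    (hobs1 : ∫⁻ q, πobs q ∂μD = 1)
    (habs : ∀ q, πQ q = 0 → πobs q = 0) :
    ∀ A : Set D, MeasurableSet A →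
      (μΛ.withDensity (fun l => πprior l * (πobs (Q l) / πQ (Q l)))) (Q ⁻¹' A)
        = ∫⁻ q in A, πobs q ∂μD :=
  consistent_posterior_pushforward_general μΛ μD Q hQ πprior hπprior hprior1 πQ hπQ hpush πobs hπobs
    habs
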